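/- Let (V,N,E) be a uniform labeled multigraph and A a unital C*-algebra. Let (u^k_i)_{k,i∈V} be a quantum permutation matrix over A indexed by V such that u^k_i u^l_j = 0 whenever |E^k_l| ≠ |E^i_j|. For edges (k,l,s),(i,j,r) ∈ E define w^{(k,l)s}_{(i,j)r} := δ_{s,r} u^k_i u^l_j. Then the E × E matrix (w^{σ}_{τ})_{σ,τ∈E} is bi-unitary: for all edges (k,l,s),(k',l',s') ∈ E, ∑_{(i,j,r)∈E} w^{(k,l)s}_{(i,j)r} (w^{(k',l')s'}_{(i,j)r})* = δ_{k,k'}δ_{l,l'}δ_{s,s'}·1, ∑_{(i,j,r)∈E} (w^{(i,j)r}_{(k,l)s})* w^{(i,j)r}_{(k',l')s'} = δ_{k,k'}δ_{l,l'}δ_{s,s'}·1, ∑_{(i,j,r)∈E} (w^{(k,l)s}_{(i,j)r})* w^{(k',l')s'}_{(i,j)r} = δ_{k,k'}δ_{l,l'}δ_{s,s'}·1, and ∑_{(i,j,r)∈E} w^{(i,j)r}_{(k,l)s} (w^{(i,j)r}_{(k',l')s'})* = δ_{k,k'}δ_{l,l'}δ_{s,s'}·1. -/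

import Mathlib

/-!
If `(k,l,s) ∈ E` and `(i,j,s) ∉ E`, uniformity gives `|E^k_l| = N ≠ |E^i_j|`, so
`u^k_i u^l_j = 0`; hence every sum over the edges `(i,j,s)` with a fixed label extends to a sum
over all of `V × V`. There it collapses by the orthonormality of the rows and columns of a
quantum permutation matrix: in a C*-algebra, projections summing to `1` are pairwise orthogonal.
The column identities are the row identities for the transposed matrix `(u^i_k)`.
-/

open scoped BigOperators

/-- A quantum permutation matrix over a unital ring with star, indexed by a finite set `X`. -/
def IsQuantumPermutation {X A : Type*} [Fintype X] [Ring A] [StarRing A]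
    (p : X → X → A) : Prop :=
  (∀ x y, star (p x y) = p x y) ∧ (∀ x y, p x y * p x y = p x y) ∧
  (∀ x, ∑ y, p x y = 1) ∧ (∀ y, ∑ x, p x y = 1)

/-- `edeg E i j` is the number of labels `r` such that `(i,j,r)` is an edge, i.e. `|E^i_j|`. -/
def edeg {V : Type*} [DecidableEq V] {N : ℕ} (E : Finset (V × V × Fin N)) (i j : V) : ℕ :=
  (E.filter fun e => e.1 = i ∧ e.2.1 = j).card

open Finset

/-- `p j = p j (∑ x, p x) p j = p j + ∑_{x ≠ j} (p x p j)⋆ (p x p j)`, so each summand of the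
positive sum on the right vanishes. -/
theorem mul_eq_zero_of_isStarProjection_of_sum_eq_one {ι A : Type*} [Fintype ι] [CStarAlgebra A]
    {p : ι → A} (hp : ∀ i, IsStarProjection (p i)) (hsum : ∑ i, p i = 1) {i j : ι}
    (hij : i ≠ j) : p i * p j = 0 := by
  classical
  let := CStarAlgebra.spectralOrder A
  have := CStarAlgebra.spectralOrderedRing A
  have hsq : ∀ x, p j * p x * p j = star (p x * p j) * (p x * p j) := fun x => by
    rw [star_mul, (hp x).isSelfAdjoint.star_eq, (hp j).isSelfAdjoint.star_eq, ← mul_assoc,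
      mul_assoc (p j) (p x) (p x), (hp x).isIdempotentElem.eq]
  have htotal : ∑ x, p j * p x * p j = p j := by
    rw [← sum_mul, ← mul_sum, hsum, mul_one, (hp j).isIdempotentElem.eq]
  have hrest : ∑ x ∈ univ.erase j, p j * p x * p j = 0 := by
    rw [← add_sum_erase _ _ (mem_univ j), (hp j).isIdempotentElem.eq,
      (hp j).isIdempotentElem.eq] at htotal
    exact add_eq_left.mp htotal
  have hnonneg : ∀ x ∈ univ.erase j, 0 ≤ p j * p x * p j := fun x _ =>
    hsq x ▸ star_mul_self_nonneg _
  have hi := (sum_eq_zero_iff_of_nonneg hnonneg).mp hrest i (mem_erase.mpr ⟨hij, mem_univ i⟩)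
  rw [hsq] at hi
  exact (CStarRing.star_mul_self_eq_zero_iff _).mp hi

namespace IsQuantumPermutation

section Ring

variable {X A : Type*} [Fintype X] [Ring A] [StarRing A] {p : X → X → A}

theorem transpose (hp : IsQuantumPermutation p) : IsQuantumPermutation fun x y => p y x :=
  ⟨fun x y => hp.1 y x, fun x y => hp.2.1 y x, hp.2.2.2, hp.2.2.1⟩

theorem isStarProjection (hp : IsQuantumPermutation p) (x y : X) : IsStarProjection (p x y) :=
  ⟨hp.2.1 x y, hp.1 x y⟩

theorem mul_eq_zero_symm (hp : IsQuantumPermutation p) {a b c d : X} (h : p a b * p c d = 0) :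
    p c d * p a b = 0 := by
  simpa [hp.1] using congrArg star h

end Ring

section CStarAlgebra

variable {X A : Type*} [Fintype X] [CStarAlgebra A] {p q : X → X → A}

theorem mul_eq_zero_of_ne_right (hp : IsQuantumPermutation p) {x y y' : X} (h : y ≠ y') :
    p x y * p x y' = 0 :=
  mul_eq_zero_of_isStarProjection_of_sum_eq_one (hp.isStarProjection x) (hp.2.2.1 x) h

theorem mul_eq_zero_of_ne_left (hp : IsQuantumPermutation p) {x x' y : X} (h : x ≠ x') :
    p x y * p x' y = 0 :=
  hp.transpose.mul_eq_zero_of_ne_right h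

theorem sum_mul_eq [DecidableEq X] (hp : IsQuantumPermutation p) (x x' : X) :
    ∑ y, p x y * p x' y = if x = x' then 1 else 0 := by
  split_ifs with h
  · subst h
    simp_rw [hp.2.1]
    exact hp.2.2.1 x
  · exact sum_eq_zero fun y _ => hp.mul_eq_zero_of_ne_left h

theorem sum_sum_mul_eq [DecidableEq X] (hp : IsQuantumPermutation p)
    (hq : IsQuantumPermutation q) (a a' b b' : X) :
    ∑ i, ∑ j, p a i * q b j * (q b' j * p a' i) = if a = a' ∧ b = b' then 1 else 0 := by
  have hfactor : ∀ i, ∑ j, p a i * q b j * (q b' j * p a' i) =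
      p a i * (∑ j, q b j * q b' j) * p a' i := fun i => by
    simp only [mul_sum, sum_mul, mul_assoc]
  simp_rw [hfactor, hq.sum_mul_eq]
  by_cases hb : b = b'
  · simp [hb, hp.sum_mul_eq]
  · simp [hb]

end CStarAlgebra

end IsQuantumPermutation

section LabeledMultigraph

variable {V : Type*} {N : ℕ} {E : Finset (V × V × Fin N)}

theorem mem_of_edeg_eq [DecidableEq V] {i j : V} (h : edeg E i j = N) (r : Fin N) : (i, j, r) ∈ E := by
  set F := E.filter fun e => e.1 = i ∧ e.2.1 = j
  have hinj : Set.InjOn (fun e : V × V × Fin N => e.2.2) F := by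
    rintro ⟨a, b, c⟩ ha ⟨a', b', c'⟩ ha' (hc : c = c')
    obtain ⟨-, rfl, rfl⟩ := mem_filter.mp ha
    obtain ⟨-, rfl, rfl⟩ := mem_filter.mp ha'
    rw [hc]
  have himage : F.image (fun e => e.2.2) = univ :=
    eq_univ_of_card _ (by rw [card_image_of_injOn hinj, Fintype.card_fin]; exact h)
  obtain ⟨e, he, rfl⟩ := mem_image.mp (himage ▸ mem_univ r)
  obtain ⟨heE, rfl, rfl⟩ := mem_filter.mp he
  exact heE

theorem edeg_ne_of_mem_of_notMem [DecidableEq V] (hUnif : ∀ i j : V, edeg E i j = 0 ∨ edeg E i j = N)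
    {k l i j : V} {s : Fin N} (hkl : (k, l, s) ∈ E) (hij : (i, j, s) ∉ E) :
    edeg E k l ≠ edeg E i j := by
  have hN : edeg E k l = N :=
    (hUnif k l).resolve_left (card_ne_zero_of_mem (mem_filter.mpr ⟨hkl, rfl, rfl⟩))
  exact fun h => hij (mem_of_edeg_eq (h ▸ hN) s)

theorem sum_ite_label_eq [Fintype V] {M : Type*} [AddCommMonoid M] {s s' : Fin N}
    (f : V → V → M) (hf : ∀ i j, (i, j, s) ∉ E → f i j = 0) :
    ∑ τ ∈ E, (if s = τ.2.2 ∧ s' = τ.2.2 then f τ.1 τ.2.1 else 0) =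
      if s = s' then ∑ i, ∑ j, f i j else 0 := by
  by_cases hs : s = s'
  · subst hs
    simp only [and_self, if_true]
    rw [sum_subset (subset_univ E) ?_]
    · simp [Fintype.sum_prod_type]
    · rintro ⟨i, j, r⟩ - hn
      by_cases hr : s = r
      · subst hr
        simp [hf i j hn]
      · simp [hr]
  · rw [if_neg hs]
    exact sum_eq_zero fun τ _ => if_neg fun h => hs (h.1.trans h.2.symm)

end LabeledMultigraph

section EdgeMatrix

variable {A : Type*} [CStarAlgebra A] {V : Type*} [Fintype V] [DecidableEq V] {N : ℕ}
  {E : Finset (V × V × Fin N)} {u : V → V → A} {w : (V × V × Fin N) → (V × V × Fin N) → A}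

theorem sum_edges_mul_star_eq (hUnif : ∀ i j : V, edeg E i j = 0 ∨ edeg E i j = N)
    (hu : IsQuantumPermutation u)
    (huE : ∀ k l i j : V, edeg E k l ≠ edeg E i j → u k i * u l j = 0)
    (hwdef : ∀ (k l i j : V) (s r : Fin N),
      w (k, l, s) (i, j, r) = if s = r then u k i * u l j else 0)
    {k l : V} {s : Fin N} (hkls : (k, l, s) ∈ E) (k' l' : V) (s' : Fin N) :
    ∑ τ ∈ E, w (k, l, s) τ * star (w (k', l', s') τ) =
      if k = k' ∧ l = l' ∧ s = s' then 1 else 0 := by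
  have hterm : ∀ τ ∈ E, w (k, l, s) τ * star (w (k', l', s') τ) =
      if s = τ.2.2 ∧ s' = τ.2.2 then u k τ.1 * u l τ.2.1 * (u l' τ.2.1 * u k' τ.1) else 0 := by
    rintro ⟨i, j, r⟩ -
    rw [hwdef, hwdef]
    split_ifs <;> simp_all [hu.1]
  have hvanish : ∀ i j, (i, j, s) ∉ E → u k i * u l j = 0 := fun i j hij =>
    huE k l i j (edeg_ne_of_mem_of_notMem hUnif hkls hij)
  rw [sum_congr rfl hterm, sum_ite_label_eq (fun i j => u k i * u l j * (u l' j * u k' i))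
    fun i j hij => by rw [hvanish i j hij, zero_mul], hu.sum_sum_mul_eq hu]
  by_cases hs : s = s' <;> simp [hs]

theorem sum_edges_star_mul_eq (hUnif : ∀ i j : V, edeg E i j = 0 ∨ edeg E i j = N)
    (hu : IsQuantumPermutation u)
    (huE : ∀ k l i j : V, edeg E k l ≠ edeg E i j → u k i * u l j = 0)
    (hwdef : ∀ (k l i j : V) (s r : Fin N),
      w (k, l, s) (i, j, r) = if s = r then u k i * u l j else 0)
    {k l : V} {s : Fin N} (hkls : (k, l, s) ∈ E) (k' l' : V) (s' : Fin N) :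
    ∑ τ ∈ E, star (w (k, l, s) τ) * w (k', l', s') τ =
      if k = k' ∧ l = l' ∧ s = s' then 1 else 0 := by
  have hterm : ∀ τ ∈ E, star (w (k, l, s) τ) * w (k', l', s') τ =
      if s = τ.2.2 ∧ s' = τ.2.2 then u l τ.2.1 * u k τ.1 * (u k' τ.1 * u l' τ.2.1) else 0 := by
    rintro ⟨i, j, r⟩ -
    rw [hwdef, hwdef]
    split_ifs <;> simp_all [hu.1]
  have hvanish : ∀ i j, (i, j, s) ∉ E → u l j * u k i = 0 := fun i j hij =>
    hu.mul_eq_zero_symm (huE k l i j (edeg_ne_of_mem_of_notMem hUnif hkls hij))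
  rw [sum_congr rfl hterm, sum_ite_label_eq (fun i j => u l j * u k i * (u k' i * u l' j))
    fun i j hij => by rw [hvanish i j hij, zero_mul], sum_comm, hu.sum_sum_mul_eq hu]
  by_cases hs : s = s' <;> simp [hs, and_comm]

end EdgeMatrix

theorem stmt11_general {A : Type*} [CStarAlgebra A]
    {V : Type*} [Fintype V] [DecidableEq V] {N : ℕ}
    (E : Finset (V × V × Fin N))
    (hUnif : ∀ i j : V, edeg E i j = 0 ∨ edeg E i j = N)
    (u : V → V → A)
    (hu : IsQuantumPermutation u)
    (huE : ∀ k l i j : V, edeg E k l ≠ edeg E i j → u k i * u l j = 0)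
    (w : (V × V × Fin N) → (V × V × Fin N) → A)
    (hwdef : ∀ (k l i j : V) (s r : Fin N),
      w (k, l, s) (i, j, r) = if s = r then u k i * u l j else 0)
    (k l : V) (s : Fin N) (hkls : (k, l, s) ∈ E)
    (k' l' : V) (s' : Fin N) :
    ((∑ τ ∈ E, w (k, l, s) τ * star (w (k', l', s') τ)) =
      if k = k' ∧ l = l' ∧ s = s' then 1 else 0) ∧
    ((∑ τ ∈ E, star (w τ (k, l, s)) * w τ (k', l', s')) =
      if k = k' ∧ l = l' ∧ s = s' then 1 else 0) ∧
    ((∑ τ ∈ E, star (w (k, l, s) τ) * w (k', l', s') τ) =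
      if k = k' ∧ l = l' ∧ s = s' then 1 else 0) ∧
    ((∑ τ ∈ E, w τ (k, l, s) * star (w τ (k', l', s'))) =
      if k = k' ∧ l = l' ∧ s = s' then 1 else 0) := by
  have huE_transpose : ∀ k l i j : V, edeg E k l ≠ edeg E i j → u i k * u j l = 0 :=
    fun k l i j h => huE i j k l h.symm
  have hwdef_transpose : ∀ (k l i j : V) (s r : Fin N),
      w (i, j, r) (k, l, s) = if s = r then u i k * u j l else 0 := fun k l i j s r => by
    simp only [hwdef, eq_comm]
  exact ⟨sum_edges_mul_star_eq hUnif hu huE hwdef hkls k' l' s',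
    sum_edges_star_mul_eq (w := fun σ τ => w τ σ) hUnif hu.transpose huE_transpose
      hwdef_transpose hkls k' l' s',
    sum_edges_star_mul_eq hUnif hu huE hwdef hkls k' l' s',
    sum_edges_mul_star_eq (w := fun σ τ => w τ σ) hUnif hu.transpose huE_transpose
      hwdef_transpose hkls k' l' s'⟩

/-- For a uniform labeled multigraph and a vertex quantum permutation matrix `(u^k_i)` with
`u^k_i u^l_j = 0` whenever `|E^k_l| ≠ |E^i_j|`, the `E × E` matrix with entries
`w^{(k,l)s}_{(i,j)r} = δ_{s,r} u^k_i u^l_j` is bi-unitary. -/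
theorem stmt11 {A : Type*} [CStarAlgebra A]
    {V : Type*} [Fintype V] [DecidableEq V] {N : ℕ} (hN : 1 ≤ N)
    (E : Finset (V × V × Fin N))
    (hE : ∀ (i j : V) (r r' : Fin N), (i, j, r) ∈ E → r' ≤ r → (i, j, r') ∈ E)
    (hUnif : ∀ i j : V, edeg E i j = 0 ∨ edeg E i j = N)
    (u : V → V → A)
    (hu : IsQuantumPermutation u)
    (huE : ∀ k l i j : V, edeg E k l ≠ edeg E i j → u k i * u l j = 0)
    (w : (V × V × Fin N) → (V × V × Fin N) → A)
    (hwdef : ∀ (k l i j : V) (s r : Fin N),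
      w (k, l, s) (i, j, r) = if s = r then u k i * u l j else 0)
    (k l : V) (s : Fin N) (hkls : (k, l, s) ∈ E)
    (k' l' : V) (s' : Fin N) (hk'l's' : (k', l', s') ∈ E) :
    ((∑ τ ∈ E, w (k, l, s) τ * star (w (k', l', s') τ)) =
      if k = k' ∧ l = l' ∧ s = s' then 1 else 0) ∧
    ((∑ τ ∈ E, star (w τ (k, l, s)) * w τ (k', l', s')) =
      if k = k' ∧ l = l' ∧ s = s' then 1 else 0) ∧
    ((∑ τ ∈ E, star (w (k, l, s) τ) * w (k', l', s') τ) =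
      if k = k' ∧ l = l' ∧ s = s' then 1 else 0) ∧
    ((∑ τ ∈ E, w τ (k, l, s) * star (w τ (k', l', s'))) =
      if k = k' ∧ l = l' ∧ s = s' then 1 else 0) :=
  stmt11_general E hUnif u hu huE w hwdef k l s hkls k' l' s'
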